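/- arXiv:math/0608402 — 3 statements merged into one kernel-verified Lean document; each statement's English description precedes it below -/
import Mathlib

section
/- Let ν be differentiable on ℝ∖{0} with ν'(x) ≥ 0 for x ≠ 0, and suppose: ∫_{-∞}^{∞} x²/(1+x²) ν'(x) dx < ∞; ν(x) → 0 as x → +∞ and as x → -∞; for every M with 0 < M < ∞ one has ∫_{-M}^{M} |ν(x)| dx < ∞ and ∫_{-M}^{M} |x| ν'(x) dx < ∞; and x ν(x) → 0 as x → 0. Define k(x) = ∫₀ˣ ν(y) dy. Then for every twice continuously differentiable function f : ℝ → ℝ with compact support and every x ∈ ℝ, the function x ↦ ∫_{-∞}^{∞} f'(y) k(y-x) dy is differentiable and d/dx [∫_{-∞}^{∞} f'(y) k(y-x) dy] = ∫_{-∞}^{∞} (f(y+x) - f(x)) ν'(y) dy. -/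
open MeasureTheory Filter Real

/-- **Lemma 2.1** (Sakhnovich, "Levy Processes, Generators").
Let `ν` be differentiable away from `0` with nonnegative derivative `ν'`, with
`∫ x²/(1+x²) ν'(x) dx < ∞`, `ν(x) → 0` as `x → ±∞`, locally integrable `|ν|` and `|x| ν'(x)`,
and `x ν(x) → 0` as `x → 0`.  Put `k(x) = ∫₀ˣ ν(y) dy`.  Then for every `C²` function `f`
with compact support and every `x`,
`d/dx ∫ f'(y) k(y - x) dy = ∫ (f(y + x) - f(x)) ν'(y) dy`. -/
theorem levy_generator_convolution_form_small_activity
    (ν ν' : ℝ → ℝ)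
    (hderiv : ∀ x : ℝ, x ≠ 0 → HasDerivAt ν (ν' x) x)
    (hpos : ∀ x : ℝ, x ≠ 0 → 0 ≤ ν' x)
    (hint : Integrable (fun x : ℝ => x ^ 2 / (1 + x ^ 2) * ν' x))
    (htop : Tendsto ν atTop (nhds 0))
    (hbot : Tendsto ν atBot (nhds 0))
    (hloc1 : ∀ M : ℝ, 0 < M → IntegrableOn (fun x => |ν x|) (Set.Icc (-M) M))
    (hloc2 : ∀ M : ℝ, 0 < M → IntegrableOn (fun x => |x| * ν' x) (Set.Icc (-M) M))
    (h0 : Tendsto (fun x => x * ν x) (nhdsWithin 0 {(0 : ℝ)}ᶜ) (nhds 0))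
    (k : ℝ → ℝ) (hk : ∀ x : ℝ, k x = ∫ y in (0 : ℝ)..x, ν y)
    (f : ℝ → ℝ) (hf : ContDiff ℝ 2 f) (hsupp : HasCompactSupport f) (x : ℝ) :
    HasDerivAt (fun z : ℝ => ∫ y : ℝ, deriv f y * k (y - z))
      (∫ y : ℝ, (f (y + x) - f x) * ν' y) x := by
  -- basic facts about f
  have hf1 : ContDiff ℝ 1 (deriv f) :=
    ((contDiff_succ_iff_deriv (n := 1)).mp (by exact_mod_cast hf)).2.2
  have hfd : Differentiable ℝ f := hf.differentiable (by norm_num)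
  have hf'd : Differentiable ℝ (deriv f) := hf1.differentiable one_ne_zero
  have hf'c : Continuous (deriv f) := hf'd.continuous
  have hf''c : Continuous (deriv (deriv f)) := hf1.continuous_deriv le_rfl
  have hsupp' : HasCompactSupport (deriv f) := hsupp.deriv
  have hsupp'' : HasCompactSupport (deriv (deriv f)) := hsupp'.deriv
  -- support radius
  obtain ⟨R₀, hR₀⟩ : ∃ R : ℝ, tsupport f ⊆ Metric.closedBall 0 R :=
    hsupp.isCompact.isBounded.subset_closedBall 0
  set R : ℝ := max R₀ 0 with hRdef
  have hR0 : 0 ≤ R := le_max_right _ _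
  have hR : tsupport f ⊆ Metric.closedBall 0 R :=
    hR₀.trans (Metric.closedBall_subset_closedBall (le_max_left _ _))
  have hfz : ∀ y : ℝ, R < |y| → f y = 0 := by
    intro y hy
    have : y ∉ tsupport f := by
      intro hmem
      have := hR hmem
      rw [Metric.mem_closedBall, Real.dist_eq, sub_zero] at this
      linarith
    exact image_eq_zero_of_notMem_tsupport this
  have hf'z : ∀ y : ℝ, R < |y| → deriv f y = 0 := by
    intro y hy
    by_contra h
    have : y ∈ tsupport f := support_deriv_subset (by simpa [Function.mem_support] using h)
    have := hR this
    rw [Metric.mem_closedBall, Real.dist_eq, sub_zero] at this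
    linarith
  have hf''z : ∀ y : ℝ, R < |y| → deriv (deriv f) y = 0 := by
    intro y hy
    by_contra h
    have h1 : y ∈ tsupport (deriv f) :=
      support_deriv_subset (by simpa [Function.mem_support] using h)
    have h2 : tsupport (deriv f) ⊆ tsupport f :=
      closure_minimal support_deriv_subset isClosed_closure
    have := hR (h2 h1)
    rw [Metric.mem_closedBall, Real.dist_eq, sub_zero] at this
    linarith
  -- bounds on f
  obtain ⟨C0, hC0⟩ : ∃ C, ∀ y : ℝ, ‖f y‖ ≤ C := hsupp.exists_bound_of_continuous hf.continuous
  obtain ⟨C1₀, hC1₀⟩ : ∃ C, ∀ y : ℝ, ‖deriv f y‖ ≤ C := hsupp'.exists_bound_of_continuous hf'c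
  obtain ⟨C2, hC2⟩ : ∃ C, ∀ y : ℝ, ‖deriv (deriv f) y‖ ≤ C :=
    hsupp''.exists_bound_of_continuous hf''c
  -- Lipschitz bound for f
  have hlipW : LipschitzWith (Real.toNNReal C1₀) f := by
    apply lipschitzWith_of_nnnorm_deriv_le hfd
    intro y
    rw [← NNReal.coe_le_coe, coe_nnnorm, Real.coe_toNNReal']
    exact (hC1₀ y).trans (le_max_left _ _)
  set C1 : ℝ := max C1₀ 0 with hC1def
  have hC1 : 0 ≤ C1 := le_max_right _ _
  have hlip : ∀ a b : ℝ, |f a - f b| ≤ C1 * |a - b| := by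
    intro a b
    have := hlipW.dist_le_mul a b
    rw [Real.dist_eq, Real.dist_eq, Real.coe_toNNReal'] at this
    exact this
  -- measurability of ν and ν'
  have hνae : AEStronglyMeasurable ν (volume : Measure ℝ) := by
    have h1 : ContinuousOn ν ({(0:ℝ)}ᶜ) := fun y hy =>
      ((hderiv y hy).continuousAt).continuousWithinAt
    have h2 : AEMeasurable ν ((volume : Measure ℝ).restrict {(0:ℝ)}ᶜ) :=
      h1.aemeasurable (isOpen_compl_singleton.measurableSet)
    rw [Measure.restrict_eq_self_of_ae_mem] at h2
    · exact h2.aestronglyMeasurable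
    · simp [ae_iff]
  have hν'ae : AEStronglyMeasurable ν' (volume : Measure ℝ) := by
    have h1 : ν' =ᵐ[volume] deriv ν := by
      have hne : ∀ᵐ y : ℝ, y ≠ 0 := by simp [ae_iff]
      filter_upwards [hne] with y hy
      exact ((hderiv y hy).deriv).symm
    exact ((measurable_deriv ν).aestronglyMeasurable).congr h1.symm
  -- interval integrability of ν
  have hνint : ∀ a b : ℝ, IntervalIntegrable ν volume a b := by
    intro a b
    set M := max |a| |b| + 1 with hM
    have hM0 : 0 < M := by positivity
    have h1 : IntegrableOn ν (Set.Icc (-M) M) := by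
      have h2 : IntegrableOn (fun x => ‖ν x‖) (Set.Icc (-M) M) := by
        simpa [Real.norm_eq_abs] using hloc1 M hM0
      exact (integrable_norm_iff hνae.restrict).mp h2
    have ha : a ∈ Set.Icc (-M) M := by
      have := abs_le.mp (le_max_left |a| |b|)
      constructor <;> [linarith; linarith]
    have hb : b ∈ Set.Icc (-M) M := by
      have := abs_le.mp (le_max_right |a| |b|)
      constructor <;> [linarith; linarith]
    rw [intervalIntegrable_iff]
    exact h1.mono_set ((Set.uIoc_subset_uIcc).trans (Set.uIcc_subset_Icc ha hb))
  -- k is continuous, k 0 = 0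
  have hke : k = fun y => ∫ t in (0:ℝ)..y, ν t := funext hk
  have hkc : Continuous k := by
    rw [hke]; exact intervalIntegral.continuous_primitive hνint 0
  have hk0 : k 0 = 0 := by rw [hk]; simp
  -- derivative of k away from 0
  have hkderiv : ∀ u : ℝ, u ≠ 0 → HasDerivAt k (ν u) u := by
    intro u hu
    rw [hke]
    exact intervalIntegral.integral_hasDerivAt_right (hνint 0 u)
      ⟨Set.univ, Filter.univ_mem, hνae.restrict⟩ ((hderiv u hu).continuousAt)
  -- integrability of the target integrand (for any shift z)
  have hAint : ∀ z : ℝ, Integrable (fun u : ℝ => (f (u + z) - f z) * ν' u) := by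
    intro z
    have hmeas : AEStronglyMeasurable (fun u : ℝ => (f (u + z) - f z) * ν' u)
        (volume : Measure ℝ) := by
      apply AEStronglyMeasurable.mul _ hν'ae
      exact ((hf.continuous.comp (continuous_id.add continuous_const)).sub
        continuous_const).aestronglyMeasurable
    have hne : ∀ᵐ u : ℝ, u ≠ 0 := by simp [ae_iff]
    have h1 : IntegrableOn (fun u : ℝ => (f (u + z) - f z) * ν' u) (Set.Icc (-1) 1) := by
      apply Integrable.mono ((hloc2 1 one_pos).const_mul C1) hmeas.restrict
      apply ae_restrict_of_ae
      filter_upwards [hne] with u hu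
      have h2 : |f (u + z) - f z| ≤ C1 * |u| := by simpa using hlip (u + z) z
      have h3 : 0 ≤ ν' u := hpos u hu
      calc ‖(f (u + z) - f z) * ν' u‖ = |f (u + z) - f z| * ν' u := by
            rw [Real.norm_eq_abs, abs_mul, abs_of_nonneg h3]
        _ ≤ (C1 * |u|) * ν' u := mul_le_mul_of_nonneg_right h2 h3
        _ = C1 * (|u| * ν' u) := by ring
        _ ≤ ‖C1 * (|u| * ν' u)‖ := le_abs_self _
    have h2 : IntegrableOn (fun u : ℝ => (f (u + z) - f z) * ν' u) (Set.Icc (-1) 1)ᶜ := by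
      apply Integrable.mono ((hint.const_mul (4 * C0)).integrableOn) hmeas.restrict
      rw [ae_restrict_iff' (measurableSet_Icc.compl)]
      filter_upwards [hne] with u hu hmem
      have h3 : 0 ≤ ν' u := hpos u hu
      have hC0' : 0 ≤ C0 := le_trans (norm_nonneg _) (hC0 z)
      have hu1 : 1 < |u| := by
        rw [Set.mem_compl_iff, Set.mem_Icc, not_and_or] at hmem
        rcases hmem with h | h
        · push_neg at h; rw [abs_of_neg (by linarith)]; linarith
        · push_neg at h; rw [abs_of_pos (by linarith)]; linarith
      have hu2 : 1 ≤ u ^ 2 := by nlinarith [sq_abs u]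
      have hhalf : (1:ℝ)/2 ≤ u ^ 2 / (1 + u ^ 2) := by
        rw [div_le_div_iff₀ (by norm_num) (by positivity)]; nlinarith
      calc ‖(f (u + z) - f z) * ν' u‖ = |f (u + z) - f z| * ν' u := by
            rw [Real.norm_eq_abs, abs_mul, abs_of_nonneg h3]
        _ ≤ (2 * C0) * ν' u := by
            apply mul_le_mul_of_nonneg_right _ h3
            calc |f (u + z) - f z| ≤ |f (u + z)| + |f z| := abs_sub _ _
              _ ≤ 2 * C0 := by
                  have h4 := hC0 (u + z); have h5 := hC0 z
                  simp only [Real.norm_eq_abs] at h4 h5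
                  linarith
        _ ≤ (4 * C0) * (u ^ 2 / (1 + u ^ 2) * ν' u) := by
            nlinarith [mul_le_mul_of_nonneg_right hhalf h3, mul_nonneg hC0' h3]
        _ ≤ ‖(4 * C0) * (u ^ 2 / (1 + u ^ 2) * ν' u)‖ := le_abs_self _
    have := h1.union h2
    rwa [Set.union_compl_self, integrableOn_univ] at this
  -- integrability of f''(·+z) * k
  have hBint : ∀ z : ℝ, Integrable (fun u : ℝ => deriv (deriv f) (u + z) * k u) := by
    intro z
    have hcs : HasCompactSupport (fun u : ℝ => deriv (deriv f) (u + z) * k u) :=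
      (hsupp''.comp_homeomorph (Homeomorph.addRight z)).mul_right
    exact Continuous.integrable_of_hasCompactSupport (by fun_prop) hcs
  -- step 3: derivative under the integral, after change of variables
  have step3 : HasDerivAt (fun z : ℝ => ∫ u : ℝ, deriv f (u + z) * k u)
      (∫ u : ℝ, deriv (deriv f) (u + x) * k u) x := by
    set M : ℝ := R + |x| + 1 with hM
    set bound : ℝ → ℝ := Set.indicator (Set.Icc (-M) M) (fun u => C2 * |k u|) with hbd
    have key := hasDerivAt_integral_of_dominated_loc_of_deriv_le (μ := (volume : Measure ℝ))
      (F := fun z u => deriv f (u + z) * k u)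
      (F' := fun z u => deriv (deriv f) (u + z) * k u)
      (x₀ := x) (bound := bound) (s := Metric.ball x 1) (Metric.ball_mem_nhds x one_pos)
      (Eventually.of_forall fun z =>
        (((hf'c.comp (continuous_id.add continuous_const)).mul hkc)).aestronglyMeasurable)
      (by
        apply Continuous.integrable_of_hasCompactSupport
        · exact (hf'c.comp (continuous_id.add continuous_const)).mul hkc
        · exact (hsupp'.comp_homeomorph (Homeomorph.addRight x)).mul_right)
      (((hf''c.comp (continuous_id.add continuous_const)).mul hkc)).aestronglyMeasurable
      (ae_of_all _ fun u => by
        intro z hz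
        show ‖deriv (deriv f) (u + z) * k u‖ ≤ bound u
        by_cases hcase : u ∈ Set.Icc (-M) M
        · rw [hbd, Set.indicator_of_mem hcase]
          calc ‖deriv (deriv f) (u + z) * k u‖ = ‖deriv (deriv f) (u + z)‖ * |k u| := by
                rw [norm_mul, Real.norm_eq_abs (k u)]
            _ ≤ C2 * |k u| := mul_le_mul_of_nonneg_right (hC2 _) (abs_nonneg _)
        · rw [hbd, Set.indicator_of_notMem hcase]
          have hzx : |z| < |x| + 1 := by
            have h6 := mem_ball_iff_norm.mp hz
            calc |z| ≤ |z - x| + |x| := by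
                  have := abs_sub_abs_le_abs_sub z x; linarith [abs_abs_sub_abs_le_abs_sub z x]
              _ < |x| + 1 := by rw [Real.norm_eq_abs] at h6; linarith
          have hMu : M < |u| := by
            rw [Set.mem_Icc, not_and_or] at hcase
            rcases hcase with h | h
            · push_neg at h; rw [abs_of_neg (by linarith [abs_nonneg x])]; linarith
            · push_neg at h; rw [abs_of_pos (by linarith [abs_nonneg x])]; linarith
          have h7 : R < |u + z| := by
            have h2 : |u| - |z| ≤ |u + z| := by
              have := abs_sub_abs_le_abs_sub u (-z); simpa [sub_neg_eq_add] using this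
            have h3 : R + |x| + 1 < |u| := hMu
            linarith
          rw [hf''z _ h7, zero_mul, norm_zero])
      (by
        exact (((continuous_const.mul hkc.abs).integrableOn_Icc)).integrable_indicator
          measurableSet_Icc)
      (ae_of_all _ fun u => by
        intro z hz
        have h1 : HasDerivAt (fun z : ℝ => u + z) 1 z := by
          simpa using (hasDerivAt_id z).const_add u
        have h2 : HasDerivAt (deriv f) (deriv (deriv f) (u + z)) (u + z) :=
          (hf'd (u + z)).hasDerivAt
        have h3 := (h2.comp z h1).mul_const (k u)
        simpa using h3)
    exact key.2
  -- change of variables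
  have hchg : (fun z : ℝ => ∫ y : ℝ, deriv f y * k (y - z))
      = fun z : ℝ => ∫ u : ℝ, deriv f (u + z) * k u := by
    funext z
    rw [← integral_add_right_eq_self (μ := volume) (fun y : ℝ => deriv f y * k (y - z)) z]
    simp
  -- step 4: the integral identity, by two integrations by parts
  have step4 : (∫ u : ℝ, deriv (deriv f) (u + x) * k u)
      = ∫ u : ℝ, (f (u + x) - f x) * ν' u := by
    have hA := hAint x
    have hB := hBint x
    set g : ℝ → ℝ := fun u => deriv (deriv f) (u + x) * k u - (f (u + x) - f x) * ν' u with hg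
    set G : ℝ → ℝ := fun u => deriv f (u + x) * k u - (f (u + x) - f x) * ν u with hG
    have hgint : Integrable g := hB.sub hA
    -- derivative of G away from 0
    have hGd : ∀ u : ℝ, u ≠ 0 → HasDerivAt G (g u) u := by
      intro u hu
      have htr : HasDerivAt (fun u : ℝ => u + x) 1 u := (hasDerivAt_id u).add_const x
      have h1 : HasDerivAt (fun u : ℝ => deriv f (u + x)) (deriv (deriv f) (u + x)) u := by
        simpa [Function.comp_def] using ((hf'd (u + x)).hasDerivAt.comp u htr)
      have h2 : HasDerivAt (fun u : ℝ => f (u + x) - f x) (deriv f (u + x)) u := by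
        have := ((hfd (u + x)).hasDerivAt.comp u htr)
        simpa using this.sub_const (f x)
      have h3 : HasDerivAt G _ u := (h1.mul (hkderiv u hu)).sub (h2.mul (hderiv u hu))
      convert h3 using 1
      simp only [hg]
      ring
    -- limit of G at +∞
    have hGtop : Tendsto G atTop (nhds 0) := by
      have hev : G =ᶠ[atTop] fun u => f x * ν u := by
        filter_upwards [eventually_ge_atTop (R + |x| + 1)] with u hu
        have h1 : R < |u + x| := by
          have := abs_nonneg x
          have h2 : R + 1 ≤ u + x := by
            have := neg_abs_le x; linarith
          rw [abs_of_pos (by linarith)]; linarith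
        simp only [hG, hfz _ h1, hf'z _ h1, zero_mul, zero_sub, neg_mul, neg_neg, zero_add]
      have := htop.const_mul (f x)
      rw [mul_zero] at this
      exact Tendsto.congr' hev.symm this
    have hGbot : Tendsto G atBot (nhds 0) := by
      have hev : G =ᶠ[atBot] fun u => f x * ν u := by
        filter_upwards [eventually_le_atBot (-(R + |x| + 1))] with u hu
        have h1 : R < |u + x| := by
          have := neg_abs_le x
          have h2 : u + x ≤ -(R + 1) := by
            have := le_abs_self x; linarith
          rw [abs_of_neg (by linarith)]; linarith
        simp only [hG, hfz _ h1, hf'z _ h1, zero_mul, zero_sub, neg_mul, neg_neg, zero_add]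
      have := hbot.const_mul (f x)
      rw [mul_zero] at this
      exact Tendsto.congr' hev.symm this
    -- limit of G at 0 (within the punctured neighborhood)
    have hG0 : Tendsto G (nhdsWithin 0 {(0:ℝ)}ᶜ) (nhds 0) := by
      have t1 : Tendsto (fun u : ℝ => deriv f (u + x) * k u) (nhdsWithin 0 {(0:ℝ)}ᶜ)
          (nhds 0) := by
        have hc : ContinuousAt (fun u : ℝ => deriv f (u + x) * k u) 0 := by fun_prop
        have := hc.tendsto
        rw [zero_add, hk0, mul_zero] at this
        exact this.mono_left nhdsWithin_le_nhds
      have t2 : Tendsto (fun u : ℝ => (f (u + x) - f x) * ν u) (nhdsWithin 0 {(0:ℝ)}ᶜ)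
          (nhds 0) := by
        have hs : Tendsto (fun t : ℝ => t⁻¹ * (f (x + t) - f x)) (nhdsWithin 0 {(0:ℝ)}ᶜ)
            (nhds (deriv f x)) := by
          have := (hfd x).hasDerivAt.tendsto_slope_zero
          simpa [smul_eq_mul] using this
        have hprod := hs.mul h0
        rw [mul_zero] at hprod
        apply Tendsto.congr' _ hprod
        filter_upwards [self_mem_nhdsWithin] with u hu
        have hu0 : u ≠ 0 := hu
        field_simp [add_comm x u]
        ring
      have := t1.sub t2
      rw [sub_zero] at this
      exact this
    -- sequence tending to 0 from the right
    set a : ℕ → ℝ := fun n => 1 / (n + 1) with ha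
    have ha_pos : ∀ n, 0 < a n := fun n => by positivity
    have ha_tend : Tendsto a atTop (nhds 0) := tendsto_one_div_add_atTop_nhds_zero_nat
    have ha_anti : ∀ m n : ℕ, m ≤ n → a n ≤ a m := by
      intro m n hmn
      apply one_div_le_one_div_of_le (by positivity)
      have : (m : ℝ) ≤ n := Nat.cast_le.mpr hmn
      linarith
    have hGa : Tendsto (fun n => G (a n)) atTop (nhds 0) := by
      apply hG0.comp
      apply tendsto_nhdsWithin_of_tendsto_nhds_of_eventually_within _ ha_tend
      exact Eventually.of_forall fun n => (ha_pos n).ne'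
    have hGa' : Tendsto (fun n => G (-(a n))) atTop (nhds 0) := by
      apply hG0.comp
      have hneg : Tendsto (fun n => -a n) atTop (nhds 0) := by simpa using ha_tend.neg
      apply tendsto_nhdsWithin_of_tendsto_nhds_of_eventually_within _ hneg
      exact Eventually.of_forall fun n => by simpa using (ha_pos n).ne'
    -- positive side
    have hIoi : (∫ u in Set.Ioi (0:ℝ), g u) = 0 := by
      have heval : ∀ n : ℕ, (∫ u in Set.Ioi (a n), g u) = 0 - G (a n) := by
        intro n
        apply integral_Ioi_of_hasDerivAt_of_tendsto
        · exact (hGd (a n) (ha_pos n).ne').continuousAt.continuousWithinAt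
        · intro u hu
          exact hGd u (lt_trans (ha_pos n) hu).ne'
        · exact hgint.integrableOn
        · exact hGtop
      have hsets : Tendsto (fun n => ∫ u in Set.Ioi (a n), g u) atTop
          (nhds (∫ u in ⋃ n, Set.Ioi (a n), g u)) := by
        apply tendsto_setIntegral_of_monotone
        · exact fun n => measurableSet_Ioi
        · intro m n hmn
          exact Set.Ioi_subset_Ioi (ha_anti m n hmn)
        · exact hgint.integrableOn
      have hunion : (⋃ n, Set.Ioi (a n)) = Set.Ioi (0:ℝ) := by
        ext u
        simp only [Set.mem_iUnion, Set.mem_Ioi]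
        constructor
        · rintro ⟨n, hn⟩; exact lt_trans (ha_pos n) hn
        · intro hu
          obtain ⟨n, hn⟩ := exists_nat_one_div_lt hu
          exact ⟨n, by simpa [ha] using hn⟩
      rw [hunion] at hsets
      have hlim2 : Tendsto (fun n => ∫ u in Set.Ioi (a n), g u) atTop (nhds 0) := by
        have : Tendsto (fun n => 0 - G (a n)) atTop (nhds (0 - 0)) :=
          tendsto_const_nhds.sub hGa
        rw [sub_zero] at this
        exact Tendsto.congr (fun n => (heval n).symm) this
      exact tendsto_nhds_unique hsets hlim2
    -- negative side
    have hIic : (∫ u in Set.Iic (0:ℝ), g u) = 0 := by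
      have heval : ∀ n : ℕ, (∫ u in Set.Iic (-(a n)), g u) = G (-(a n)) - 0 := by
        intro n
        apply integral_Iic_of_hasDerivAt_of_tendsto
        · exact (hGd (-(a n)) (by simpa using (ha_pos n).ne')).continuousAt.continuousWithinAt
        · intro u hu
          have : u < 0 := lt_trans hu (by simpa using (ha_pos n))
          exact hGd u this.ne
        · exact hgint.integrableOn
        · exact hGbot
      have hsets : Tendsto (fun n => ∫ u in Set.Iic (-(a n)), g u) atTop
          (nhds (∫ u in ⋃ n, Set.Iic (-(a n)), g u)) := by
        apply tendsto_setIntegral_of_monotone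
        · exact fun n => measurableSet_Iic
        · intro m n hmn
          exact Set.Iic_subset_Iic.mpr (by simpa using ha_anti m n hmn)
        · exact hgint.integrableOn
      have hunion : (⋃ n, Set.Iic (-(a n))) = Set.Iio (0:ℝ) := by
        ext u
        simp only [Set.mem_iUnion, Set.mem_Iic, Set.mem_Iio]
        constructor
        · rintro ⟨n, hn⟩
          have := ha_pos n; linarith
        · intro hu
          obtain ⟨n, hn⟩ := exists_nat_one_div_lt (show (0:ℝ) < -u by linarith)
          refine ⟨n, by simp only [ha] at *; linarith⟩
      rw [hunion] at hsets
      have hlim2 : Tendsto (fun n => ∫ u in Set.Iic (-(a n)), g u) atTop (nhds 0) := by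
        have : Tendsto (fun n => G (-(a n)) - 0) atTop (nhds (0 - 0)) :=
          hGa'.sub tendsto_const_nhds
        rw [sub_zero] at this
        exact Tendsto.congr (fun n => (heval n).symm) this
      have h1 : (∫ u in Set.Iio (0:ℝ), g u) = 0 := tendsto_nhds_unique hsets hlim2
      rw [← setIntegral_congr_set Iio_ae_eq_Iic]
      exact h1
    -- combine
    have htotal : (∫ u : ℝ, g u) = 0 := by
      rw [← intervalIntegral.integral_Iic_add_Ioi (b := (0:ℝ)) hgint.integrableOn
        hgint.integrableOn, hIoi, hIic, add_zero]
    rw [hg] at htotal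
    rw [integral_sub hB hA] at htotal
    linarith
  rw [hchg, ← step4]
  exact step3
end

section
/- Let 1 < α < 2, C > 0, and let ν' : ℝ∖{0} → ℝ be measurable with 0 ≤ ν'(y) ≤ C|y|^{-α-1} for all y ≠ 0. Define ν(y) = ∫_{-∞}^{y} ν'(t) dt for y < 0 and ν(y) = -∫_{y}^{∞} ν'(t) dt for y > 0, and define k₀(y) = ∫_{-∞}^{y} (y-t) ν'(t) dt for y < 0 and k₀(y) = ∫_{y}^{∞} (t-y) ν'(t) dt for y > 0. Then: k₀(y) is finite for every y ≠ 0; k₀ is differentiable on ℝ∖{0} with k₀'(y) = ν(y); y k₀(y) → 0 and y² ν(y) → 0 as y → 0; and for every M > 0, ∫_{-M}^{M} |k₀(y)| dy < ∞ and ∫_{-M}^{M} |y ν(y)| dy < ∞. -/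
open MeasureTheory Filter Real

open Set in
private lemma levy_intOn_g {α C : ℝ} (hα1 : 1 < α) {g : ℝ → ℝ} (hg : Measurable g)
    (hbd : ∀ t : ℝ, t ≠ 0 → 0 ≤ g t ∧ g t ≤ C * |t| ^ (-α - 1)) {y : ℝ} (hy : 0 < y) :
    IntegrableOn g (Ioi y) := by
  have base : IntegrableOn (fun t : ℝ => C * t ^ (-α - 1)) (Ioi y) :=
    (integrableOn_Ioi_rpow_of_lt (by linarith) hy).const_mul C
  refine base.mono' hg.aestronglyMeasurable ?_
  filter_upwards [ae_restrict_mem measurableSet_Ioi] with t ht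
  have ht0 : 0 < t := hy.trans ht
  have h := hbd t ht0.ne'
  rw [Real.norm_eq_abs, abs_of_nonneg h.1]
  calc g t ≤ C * |t| ^ (-α - 1) := h.2
  _ = C * t ^ (-α-1) := by rw [abs_of_pos ht0]

open Set in
private lemma levy_g_val {α C : ℝ} (hα1 : 1 < α) {g : ℝ → ℝ} (hg : Measurable g)
    (hbd : ∀ t : ℝ, t ≠ 0 → 0 ≤ g t ∧ g t ≤ C * |t| ^ (-α - 1)) {y : ℝ} (hy : 0 < y) :
    |∫ t in Ioi y, g t| ≤ C / α * y ^ (-α) := by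
  have hα0 : (0:ℝ) < α := by linarith
  have hnn : 0 ≤ ∫ t in Ioi y, g t :=
    setIntegral_nonneg measurableSet_Ioi (fun t ht => (hbd t (hy.trans ht).ne').1)
  rw [abs_of_nonneg hnn]
  have hcmp : (∫ t in Ioi y, g t) ≤ ∫ t in Ioi y, C * t ^ (-α - 1) := by
    refine setIntegral_mono_on (levy_intOn_g hα1 hg hbd hy)
      ((integrableOn_Ioi_rpow_of_lt (by linarith) hy).const_mul C) measurableSet_Ioi ?_
    intro t ht
    have ht0 : 0 < t := hy.trans ht
    simpa [abs_of_pos ht0] using (hbd t ht0.ne').2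
  refine hcmp.trans (le_of_eq ?_)
  rw [integral_const_mul, integral_Ioi_rpow_of_lt (by linarith) hy,
    show (-α - 1 + 1) = -α by ring]
  field_simp

open Set in
private lemma levy_intOn_lin {α C : ℝ} (hα1 : 1 < α) {g : ℝ → ℝ} (hg : Measurable g)
    (hbd : ∀ t : ℝ, t ≠ 0 → 0 ≤ g t ∧ g t ≤ C * |t| ^ (-α - 1)) {y : ℝ} (hy : 0 < y) :
    IntegrableOn (fun t => (t - y) * g t) (Ioi y) := by
  have base : IntegrableOn (fun t : ℝ => C * t ^ (-α)) (Ioi y) :=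
    (integrableOn_Ioi_rpow_of_lt (by linarith) hy).const_mul C
  refine base.mono' ((measurable_id.sub_const y).mul hg).aestronglyMeasurable ?_
  filter_upwards [ae_restrict_mem measurableSet_Ioi] with t ht
  have ht0 : 0 < t := hy.trans ht
  have h := hbd t ht0.ne'
  have hty : (0:ℝ) ≤ t - y := by simp only [mem_Ioi] at ht; linarith
  rw [Real.norm_eq_abs, abs_mul, abs_of_nonneg hty, abs_of_nonneg h.1]
  calc (t - y) * g t ≤ t * (C * t ^ (-α - 1)) := by
        refine mul_le_mul (by linarith) (by simpa [abs_of_pos ht0] using h.2) h.1 ht0.le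
  _ = C * t ^ (-α) := by
        rw [show (-α : ℝ) = (-α - 1) + 1 by ring, Real.rpow_add ht0, Real.rpow_one]; ring

open Set in
private lemma levy_lin_val {α C : ℝ} (hα1 : 1 < α) {g : ℝ → ℝ} (hg : Measurable g)
    (hbd : ∀ t : ℝ, t ≠ 0 → 0 ≤ g t ∧ g t ≤ C * |t| ^ (-α - 1)) {y : ℝ} (hy : 0 < y) :
    |∫ t in Ioi y, (t - y) * g t| ≤ C / (α - 1) * y ^ (1 - α) := by
  have hnn : 0 ≤ ∫ t in Ioi y, (t - y) * g t := by
    refine setIntegral_nonneg measurableSet_Ioi (fun t ht => ?_)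
    have ht0 : 0 < t := hy.trans ht
    have : (0:ℝ) ≤ t - y := by simp only [mem_Ioi] at ht; linarith
    exact mul_nonneg this (hbd t ht0.ne').1
  rw [abs_of_nonneg hnn]
  have hcmp : (∫ t in Ioi y, (t - y) * g t) ≤ ∫ t in Ioi y, C * t ^ (-α) := by
    refine setIntegral_mono_on (levy_intOn_lin hα1 hg hbd hy)
      ((integrableOn_Ioi_rpow_of_lt (by linarith) hy).const_mul C) measurableSet_Ioi ?_
    intro t ht
    have ht0 : 0 < t := hy.trans ht
    have h := hbd t ht0.ne'
    calc (t - y) * g t ≤ t * (C * t ^ (-α - 1)) := by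
          refine mul_le_mul (by simp only [mem_Ioi] at ht; linarith)
            (by simpa [abs_of_pos ht0] using h.2) h.1 ht0.le
    _ = C * t ^ (-α) := by
          rw [show (-α : ℝ) = (-α - 1) + 1 by ring, Real.rpow_add ht0, Real.rpow_one]; ring
  refine hcmp.trans (le_of_eq ?_)
  rw [integral_const_mul, integral_Ioi_rpow_of_lt (by linarith) hy,
    show (-α + 1) = 1 - α by ring]
  have h1 : α - 1 ≠ 0 := by linarith
  have h2 : (1:ℝ) - α ≠ 0 := by linarith
  field_simp
  ring

open Set in
private lemma levy_hasDeriv {α C : ℝ} (hα1 : 1 < α) {g : ℝ → ℝ} (hg : Measurable g)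
    (hbd : ∀ t : ℝ, t ≠ 0 → 0 ≤ g t ∧ g t ≤ C * |t| ^ (-α - 1))
    {y : ℝ} (hy : 0 < y) :
    HasDerivAt (fun x => ∫ t in Ioi x, (t - x) * g t) (-∫ t in Ioi y, g t) y := by
  set a : ℝ := y / 2 with ha
  have ha0 : 0 < a := half_pos hy
  have hay : a < y := by rw [ha]; linarith
  set μ : Measure ℝ := volume.restrict (Ioi a) with hμ
  set F : ℝ → ℝ → ℝ := fun x t => max (t - x) 0 * g t with hF
  set F' : ℝ → ℝ := fun t => if y < t then -g t else 0 with hF'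
  have hFind : ∀ x t : ℝ, F x t = (Ioi x).indicator (fun t => (t - x) * g t) t := by
    intro x t
    rcases le_or_gt t x with h | h
    · simp [hF, Set.indicator_apply, not_lt.2 h, max_eq_right (by linarith : t - x ≤ (0:ℝ))]
    · simp [hF, Set.indicator_apply, h, max_eq_left (by linarith : (0:ℝ) ≤ t - x)]
  have key := hasDerivAt_integral_of_dominated_loc_of_lip (μ := μ) (F := F) (F' := F')
      (x₀ := y) (bound := g) (s := Metric.ball y (y / 2)) (Metric.ball_mem_nhds y (half_pos hy))
      (Eventually.of_forall fun x =>
        (((measurable_id.sub_const x).max measurable_const).mul hg).aestronglyMeasurable)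
      ?_ ((hg.neg.ite measurableSet_Ioi measurable_const).aestronglyMeasurable) ?_
      (levy_intOn_g hα1 hg hbd ha0) ?_
  · obtain ⟨-, hkey⟩ := key
    have hval : (∫ t, F' t ∂μ) = -∫ t in Ioi y, g t := by
      have h1 : F' = fun t => -((Ioi y).indicator g t) := by
        funext t
        rcases lt_or_ge y t with h | h
        · simp [hF', Set.indicator_apply, h]
        · simp [hF', Set.indicator_apply, not_lt.2 h]
      rw [h1, integral_neg, integral_indicator measurableSet_Ioi, hμ,
        Measure.restrict_restrict measurableSet_Ioi, Set.Ioi_inter_Ioi,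
        sup_eq_left.2 hay.le]
    rw [hval] at hkey
    refine hkey.congr_of_eventuallyEq ?_
    filter_upwards [Ioi_mem_nhds hay] with x hx
    have : (fun t => F x t) = (Ioi x).indicator (fun t => (t - x) * g t) := funext (hFind x)
    rw [this, integral_indicator measurableSet_Ioi, hμ,
      Measure.restrict_restrict measurableSet_Ioi, Set.Ioi_inter_Ioi,
      sup_eq_left.2 (le_of_lt hx)]
  · refine (levy_intOn_lin hα1 hg hbd ha0).mono' ?_ ?_
    · exact (((measurable_id.sub_const y).max measurable_const).mul hg).aestronglyMeasurable
    · filter_upwards [ae_restrict_mem measurableSet_Ioi] with t ht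
      have ht0 : 0 < t := ha0.trans ht
      have hgt := (hbd t ht0.ne').1
      have hta : (0:ℝ) ≤ t - a := by simp only [mem_Ioi] at ht; linarith
      rw [Real.norm_eq_abs, abs_mul, abs_of_nonneg (le_max_right _ _), abs_of_nonneg hgt]
      refine mul_le_mul ?_ le_rfl hgt hta
      exact max_le (by linarith) hta
  · refine Eventually.of_forall fun t => ?_
    have hL : LipschitzWith (Real.nnabs (g t)) (fun x => F x t) := by
      refine LipschitzWith.of_dist_le_mul fun x x' => ?_
      simp only [Real.dist_eq, hF]
      rw [← sub_mul, abs_mul, Real.coe_nnabs]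
      rw [mul_comm (|g t|)]
      refine mul_le_mul_of_nonneg_right ?_ (abs_nonneg _)
      calc |max (t - x) 0 - max (t - x') 0| ≤ |(t - x) - (t - x')| :=
            abs_max_sub_max_le_abs _ _ _
      _ = |x - x'| := by rw [show (t - x) - (t - x') = -(x - x') by ring, abs_neg]
    exact hL.lipschitzOnWith
  · have h0 : μ {y} = 0 := by
      rw [hμ, Measure.restrict_apply (measurableSet_singleton y)]
      exact measure_mono_null Set.inter_subset_left (measure_singleton y)
    have hne : ∀ᵐ t ∂μ, t ≠ y := by
      rw [ae_iff]
      simpa only [ne_eq, not_not, Set.setOf_eq_eq_singleton] using h0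
    filter_upwards [hne] with t hty
    rcases lt_or_ge y t with hlt | hle
    · have hd : HasDerivAt (fun x => (t - x) * g t) (-(g t)) y := by
        have h' := ((hasDerivAt_const y t).sub (hasDerivAt_id y)).mul_const (g t)
        simpa using h'
      have : HasDerivAt (fun x => F x t) (-(g t)) y := by
        refine hd.congr_of_eventuallyEq ?_
        filter_upwards [Iio_mem_nhds hlt] with x hx
        simp [hF, max_eq_left (by simp only [mem_Iio] at hx; linarith : (0:ℝ) ≤ t - x)]
      simpa [hF', if_pos hlt] using this
    · have hyt : t < y := lt_of_le_of_ne hle hty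
      have : HasDerivAt (fun x => F x t) 0 y := by
        refine (hasDerivAt_const y (0:ℝ)).congr_of_eventuallyEq ?_
        filter_upwards [Ioi_mem_nhds hyt] with x hx
        simp [hF, max_eq_right (by simp only [mem_Ioi] at hx; linarith : t - x ≤ (0:ℝ))]
      simpa [hF', if_neg (not_lt.2 hle)] using this

open Set in
private lemma levy_reflect_intOn {f : ℝ → ℝ} {y : ℝ}
    (h : IntegrableOn (fun t => f (-t)) (Ioi (-y))) : IntegrableOn f (Iio y) := by
  have key := (MeasurePreserving.integrableOn_comp_preimage
    (Measure.measurePreserving_neg (volume : Measure ℝ))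
    (Homeomorph.neg ℝ).measurableEmbedding (f := f) (s := Iio y))
  refine key.1 ?_
  have hpre : ((fun x : ℝ => -x) ⁻¹' Iio y) = Ioi (-y) := by
    ext x; simp only [Set.mem_preimage, Set.mem_Iio, Set.mem_Ioi]; exact neg_lt
  simpa [Function.comp_def, hpre] using h

open Set in
private lemma levy_reflect_intOn' {f : ℝ → ℝ} {s : Set ℝ}
    (h : IntegrableOn f s) : IntegrableOn (fun t => f (-t)) ((fun x : ℝ => -x) ⁻¹' s) := by
  have key := (MeasurePreserving.integrableOn_comp_preimage
    (Measure.measurePreserving_neg (volume : Measure ℝ))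
    (Homeomorph.neg ℝ).measurableEmbedding (f := f) (s := s))
  simpa [Function.comp_def] using key.2 h

/-- **Proposition 2.1, case `1 < α < 2`** (Sakhnovich, "Levy Processes, Generators").
If the Lévy density `ν'` satisfies `0 ≤ ν'(y) ≤ C |y|^{-α-1}` with `1 < α < 2`, then the
tail-function `ν(y) = ∫_{-∞}^y ν'` (`y<0`), `= -∫_y^∞ ν'` (`y>0`) and second tail-function
`k₀(y) = ∫_{-∞}^y (y-t)ν'(t)dt` (`y<0`), `= ∫_y^∞ (t-y)ν'(t)dt` (`y>0`) satisfy: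
`k₀` is finite (the defining integrand is integrable) for `y ≠ 0`; `k₀' = ν` away from `0`;
`y k₀(y) → 0` and `y² ν(y) → 0` as `y → 0`; and `k₀` and `y ν(y)` are locally integrable. -/
theorem stable_dominated_levy_density_kernel_properties_high_index
    (α C : ℝ) (hα1 : 1 < α) (hα2 : α < 2) (hC : 0 < C)
    (ν' : ℝ → ℝ) (hmeas : Measurable ν')
    (hbd : ∀ y : ℝ, y ≠ 0 → 0 ≤ ν' y ∧ ν' y ≤ C * |y| ^ (-α - 1))
    (ν k₀ : ℝ → ℝ)
    (hνneg : ∀ y : ℝ, y < 0 → ν y = ∫ t in Set.Iio y, ν' t)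
    (hνpos : ∀ y : ℝ, 0 < y → ν y = -∫ t in Set.Ioi y, ν' t)
    (hkneg : ∀ y : ℝ, y < 0 → k₀ y = ∫ t in Set.Iio y, (y - t) * ν' t)
    (hkpos : ∀ y : ℝ, 0 < y → k₀ y = ∫ t in Set.Ioi y, (t - y) * ν' t) :
    (∀ y : ℝ, y < 0 → IntegrableOn (fun t => (y - t) * ν' t) (Set.Iio y)) ∧
    (∀ y : ℝ, 0 < y → IntegrableOn (fun t => (t - y) * ν' t) (Set.Ioi y)) ∧
    (∀ y : ℝ, y ≠ 0 → HasDerivAt k₀ (ν y) y) ∧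
    Tendsto (fun y => y * k₀ y) (nhdsWithin 0 {(0 : ℝ)}ᶜ) (nhds 0) ∧
    Tendsto (fun y => y ^ 2 * ν y) (nhdsWithin 0 {(0 : ℝ)}ᶜ) (nhds 0) ∧
    (∀ M : ℝ, 0 < M → IntegrableOn (fun y => |k₀ y|) (Set.Icc (-M) M)) ∧
    (∀ M : ℝ, 0 < M → IntegrableOn (fun y => |y * ν y|) (Set.Icc (-M) M)) := by
  have hα0 : (0:ℝ) < α := by linarith
  have hgm : Measurable (fun t : ℝ => ν' (-t)) := hmeas.comp measurable_neg
  have hgbd : ∀ t : ℝ, t ≠ 0 → 0 ≤ ν' (-t) ∧ ν' (-t) ≤ C * |t| ^ (-α - 1) := by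
    intro t ht
    simpa [abs_neg] using hbd (-t) (neg_ne_zero.2 ht)
  -- reflection identities
  have hreflect : ∀ (f : ℝ → ℝ) (x : ℝ), (∫ t in Set.Iio x, f t) = ∫ t in Set.Ioi (-x), f (-t) := by
    intro f x
    rw [integral_comp_neg_Ioi, neg_neg, integral_Iic_eq_integral_Iio]
  have hrefl_lin : ∀ x : ℝ, x < 0 →
      (∫ t in Set.Iio x, (x - t) * ν' t) = ∫ t in Set.Ioi (-x), (t - (-x)) * ν' (-t) := by
    intro x hx
    rw [hreflect (fun s => (x - s) * ν' s) x]
    exact setIntegral_congr_fun measurableSet_Ioi (fun t _ => by ring)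
  have hrefl_g : ∀ x : ℝ, x < 0 →
      (∫ t in Set.Iio x, ν' t) = ∫ t in Set.Ioi (-x), ν' (-t) := fun x _ => hreflect ν' x
  -- conjunct 1
  have hconj1 : ∀ y : ℝ, y < 0 → IntegrableOn (fun t => (y - t) * ν' t) (Set.Iio y) := by
    intro y hy
    have h1 := levy_intOn_lin hα1 hgm hgbd (show (0:ℝ) < -y by linarith)
    have h2 : IntegrableOn (fun t => (y - (-t)) * ν' (-t)) (Set.Ioi (-y)) :=
      h1.congr_fun (fun t _ => by ring) measurableSet_Ioi
    exact levy_reflect_intOn h2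
  -- conjunct 3 : derivative
  have hderiv : ∀ y : ℝ, y ≠ 0 → HasDerivAt k₀ (ν y) y := by
    intro y hy
    rcases hy.lt_or_gt with hy0 | hy0
    · have hd := levy_hasDeriv hα1 hgm hgbd (show (0:ℝ) < -y by linarith)
      have hcomp := hd.comp y (hasDerivAt_neg y)
      have hk : HasDerivAt k₀ ((-∫ t in Set.Ioi (-y), ν' (-t)) * (-1)) y := by
        refine hcomp.congr_of_eventuallyEq ?_
        filter_upwards [Iio_mem_nhds hy0] with x hx
        show k₀ x = ((fun x => ∫ t in Set.Ioi x, (t - x) * ν' (-t)) ∘ Neg.neg) x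
        simp only [Function.comp_apply]
        rw [hkneg x hx, hrefl_lin x hx]
      convert hk using 1
      rw [hνneg y hy0, hrefl_g y hy0]; ring
    · have hd := levy_hasDeriv hα1 hmeas hbd hy0
      have hk : HasDerivAt k₀ (-∫ t in Set.Ioi y, ν' t) y := by
        refine hd.congr_of_eventuallyEq ?_
        filter_upwards [Ioi_mem_nhds hy0] with x hx
        exact hkpos x hx
      rw [hνpos y hy0]
      exact hk
  -- global bounds
  have hk_bound : ∀ x : ℝ, x ≠ 0 → |k₀ x| ≤ C / (α - 1) * |x| ^ (1 - α) := by
    intro x hx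
    rcases hx.lt_or_gt with h | h
    · rw [hkneg x h, hrefl_lin x h, abs_of_neg h]
      exact levy_lin_val hα1 hgm hgbd (by linarith)
    · rw [hkpos x h, abs_of_pos h]
      exact levy_lin_val hα1 hmeas hbd h
  have hν_bound : ∀ x : ℝ, x ≠ 0 → |ν x| ≤ C / α * |x| ^ (-α) := by
    intro x hx
    rcases hx.lt_or_gt with h | h
    · rw [hνneg x h, hrefl_g x h, abs_of_neg h]
      exact levy_g_val hα1 hgm hgbd (by linarith)
    · rw [hνpos x h, abs_neg, abs_of_pos h]
      exact levy_g_val hα1 hmeas hbd h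
  -- tendsto of the majorant
  have hpow_tendsto : ∀ K : ℝ,
      Tendsto (fun y : ℝ => K * |y| ^ (2 - α)) (nhdsWithin 0 {(0:ℝ)}ᶜ) (nhds 0) := by
    intro K
    have h1 : Tendsto (fun y : ℝ => |y|) (nhdsWithin 0 {(0:ℝ)}ᶜ) (nhds 0) := by
      have := (continuous_abs.tendsto (0:ℝ)).mono_left
        (nhdsWithin_le_nhds (s := {(0:ℝ)}ᶜ))
      simpa using this
    have h2 : Tendsto (fun x : ℝ => x ^ (2 - α)) (nhds (0:ℝ)) (nhds 0) := by
      have := (Real.continuousAt_rpow_const 0 (2 - α) (Or.inr (by linarith))).tendsto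
      simpa [Real.zero_rpow (show (2:ℝ) - α ≠ 0 by linarith)] using this
    have h3 := (h2.comp h1).const_mul K
    simpa using h3
  have htend1 : Tendsto (fun y => y * k₀ y) (nhdsWithin 0 {(0:ℝ)}ᶜ) (nhds 0) := by
    refine squeeze_zero_norm' ?_ (hpow_tendsto (C / (α - 1)))
    filter_upwards [eventually_mem_nhdsWithin] with y hy
    have hy0 : y ≠ 0 := hy
    rw [Real.norm_eq_abs, abs_mul]
    have h2 : |y| * |k₀ y| ≤ |y| * (C / (α - 1) * |y| ^ (1 - α)) :=
      mul_le_mul_of_nonneg_left (hk_bound y hy0) (abs_nonneg y)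
    refine h2.trans (le_of_eq ?_)
    rw [show (2:ℝ) - α = 1 + (1 - α) by ring, Real.rpow_add (abs_pos.2 hy0), Real.rpow_one]
    ring
  have htend2 : Tendsto (fun y => y ^ 2 * ν y) (nhdsWithin 0 {(0:ℝ)}ᶜ) (nhds 0) := by
    refine squeeze_zero_norm' ?_ (hpow_tendsto (C / α))
    filter_upwards [eventually_mem_nhdsWithin] with y hy
    have hy0 : y ≠ 0 := hy
    rw [Real.norm_eq_abs, abs_mul, abs_pow, sq_abs]
    have h2 : y ^ 2 * |ν y| ≤ y ^ 2 * (C / α * |y| ^ (-α)) :=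
      mul_le_mul_of_nonneg_left (hν_bound y hy0) (sq_nonneg _)
    refine h2.trans (le_of_eq ?_)
    have hsq : |y| ^ ((2:ℕ):ℝ) = y ^ 2 := by rw [Real.rpow_natCast, sq_abs]
    rw [show (2:ℝ) - α = ((2:ℕ):ℝ) + (-α) by push_cast; ring,
      Real.rpow_add (abs_pos.2 hy0), hsq]
    ring
  -- continuity of k₀ off 0
  have hkcont : ContinuousOn k₀ ({(0:ℝ)}ᶜ) := fun x hx =>
    ((hderiv x hx).continuousAt).continuousWithinAt
  -- measurable models for ν
  have hNposM : Measurable (fun y : ℝ =>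
      ∫ t, ({p : ℝ × ℝ | p.1 < p.2}.indicator (fun p => ν' p.2)) (y, t)) :=
    (((hmeas.comp measurable_snd).indicator
      (measurableSet_lt measurable_fst measurable_snd)).stronglyMeasurable.integral_prod_right').measurable
  have hNpos_eq : ∀ y : ℝ,
      (∫ t, ({p : ℝ × ℝ | p.1 < p.2}.indicator (fun p => ν' p.2)) (y, t))
        = ∫ t in Set.Ioi y, ν' t := by
    intro y
    have hpt : ∀ t : ℝ, ({p : ℝ × ℝ | p.1 < p.2}.indicator (fun p => ν' p.2)) (y, t)
        = (Set.Ioi y).indicator ν' t := by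
      intro t
      by_cases h : y < t
      · simp [Set.indicator_apply, h, Set.mem_Ioi]
      · simp [Set.indicator_apply, h, Set.mem_Ioi]
    simp_rw [hpt]
    rw [integral_indicator measurableSet_Ioi]
  have hNnegM : Measurable (fun y : ℝ =>
      ∫ t, ({p : ℝ × ℝ | p.2 < p.1}.indicator (fun p => ν' p.2)) (y, t)) :=
    (((hmeas.comp measurable_snd).indicator
      (measurableSet_lt measurable_snd measurable_fst)).stronglyMeasurable.integral_prod_right').measurable
  have hNneg_eq : ∀ y : ℝ,
      (∫ t, ({p : ℝ × ℝ | p.2 < p.1}.indicator (fun p => ν' p.2)) (y, t))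
        = ∫ t in Set.Iio y, ν' t := by
    intro y
    have hpt : ∀ t : ℝ, ({p : ℝ × ℝ | p.2 < p.1}.indicator (fun p => ν' p.2)) (y, t)
        = (Set.Iio y).indicator ν' t := by
      intro t
      by_cases h : t < y
      · simp [Set.indicator_apply, h, Set.mem_Iio]
      · simp [Set.indicator_apply, h, Set.mem_Iio]
    simp_rw [hpt]
    rw [integral_indicator measurableSet_Iio]
  -- base integrability of rpow near 0
  have hbase_pos : ∀ M : ℝ, 0 < M → IntegrableOn (fun y : ℝ => y ^ (1 - α)) (Set.Ioc 0 M) := by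
    intro M hM
    rw [← intervalIntegrable_iff_integrableOn_Ioc_of_le hM.le]
    exact intervalIntegral.intervalIntegrable_rpow' (by linarith)
  have hbase_neg : ∀ M : ℝ, 0 < M →
      IntegrableOn (fun y : ℝ => (-y) ^ (1 - α)) (Set.Ico (-M) 0) := by
    intro M hM
    have h := levy_reflect_intOn' (hbase_pos M hM)
    have hpre : ((fun x : ℝ => -x) ⁻¹' Set.Ioc 0 M) = Set.Ico (-M) 0 := by
      ext x
      simp only [Set.mem_preimage, Set.mem_Ioc, Set.mem_Ico]
      constructor
      · rintro ⟨h1, h2⟩; constructor <;> linarith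
      · rintro ⟨h1, h2⟩; constructor <;> linarith
    rwa [hpre] at h
  have hnull : ∀ f : ℝ → ℝ, IntegrableOn f {(0:ℝ)} := by
    intro f
    rw [IntegrableOn, Measure.restrict_eq_zero.2 (measure_singleton 0)]
    exact integrable_zero_measure
  have hsplit : ∀ M : ℝ, 0 < M →
      Set.Icc (-M) M = (Set.Ico (-M) 0 ∪ Set.Ioc 0 M) ∪ {(0:ℝ)} := by
    intro M hM
    ext x
    simp only [Set.mem_Icc, Set.mem_union, Set.mem_Ico, Set.mem_Ioc, Set.mem_singleton_iff]
    constructor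
    · rintro ⟨h1, h2⟩
      rcases lt_trichotomy x 0 with h | h | h
      · exact Or.inl (Or.inl ⟨h1, h⟩)
      · exact Or.inr h
      · exact Or.inl (Or.inr ⟨h, h2⟩)
    · rintro ((⟨h1, h2⟩ | ⟨h1, h2⟩) | h)
      · constructor <;> linarith
      · constructor <;> linarith
      · subst h; constructor <;> linarith
  refine ⟨hconj1, fun y hy => levy_intOn_lin hα1 hmeas hbd hy, hderiv, htend1, htend2, ?_, ?_⟩
  · -- |k₀| locally integrable
    intro M hM
    rw [hsplit M hM]
    refine IntegrableOn.union (IntegrableOn.union ?_ ?_) (hnull _)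
    · refine Integrable.mono' ((hbase_neg M hM).const_mul (C / (α - 1))) ?_ ?_
      · exact ((hkcont.mono
          (fun x hx => Set.mem_compl_singleton_iff.2 (ne_of_lt hx.2))).abs).aestronglyMeasurable
          measurableSet_Ico
      · filter_upwards [ae_restrict_mem measurableSet_Ico] with x hx
        have hx0 : x < 0 := hx.2
        rw [Real.norm_eq_abs, abs_abs]
        have h := hk_bound x hx0.ne
        rwa [abs_of_neg hx0] at h
    · refine Integrable.mono' ((hbase_pos M hM).const_mul (C / (α - 1))) ?_ ?_
      · exact ((hkcont.mono
          (fun x hx => Set.mem_compl_singleton_iff.2 (ne_of_gt hx.1))).abs).aestronglyMeasurable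
          measurableSet_Ioc
      · filter_upwards [ae_restrict_mem measurableSet_Ioc] with x hx
        have hx0 : 0 < x := hx.1
        rw [Real.norm_eq_abs, abs_abs]
        have h := hk_bound x hx0.ne'
        rwa [abs_of_pos hx0] at h
  · -- |y * ν y| locally integrable
    intro M hM
    rw [hsplit M hM]
    refine IntegrableOn.union (IntegrableOn.union ?_ ?_) (hnull _)
    · have hmodel : IntegrableOn (fun y : ℝ =>
          |y * (∫ t, ({p : ℝ × ℝ | p.2 < p.1}.indicator (fun p => ν' p.2)) (y, t))|)
          (Set.Ico (-M) 0) := by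
        refine Integrable.mono' ((hbase_neg M hM).const_mul (C / α)) ?_ ?_
        · exact ((measurable_id.mul hNnegM).abs).aestronglyMeasurable
        · filter_upwards [ae_restrict_mem measurableSet_Ico] with x hx
          have hx0 : x < 0 := hx.2
          rw [Real.norm_eq_abs, abs_abs, abs_mul, hNneg_eq x]
          have hb : |∫ t in Set.Iio x, ν' t| ≤ C / α * (-x) ^ (-α) := by
            rw [hrefl_g x hx0]
            exact levy_g_val hα1 hgm hgbd (by linarith)
          have h2 : |x| * |∫ t in Set.Iio x, ν' t| ≤ |x| * (C / α * (-x) ^ (-α)) :=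
            mul_le_mul_of_nonneg_left hb (abs_nonneg x)
          refine h2.trans (le_of_eq ?_)
          rw [abs_of_neg hx0, show (1:ℝ) - α = 1 + (-α) by ring,
            Real.rpow_add (by linarith : (0:ℝ) < -x), Real.rpow_one]
          ring
      refine hmodel.congr_fun ?_ measurableSet_Ico
      intro x hx
      simp only
      rw [hNneg_eq x, ← hνneg x hx.2]
    · have hmodel : IntegrableOn (fun y : ℝ =>
          |y * (-(∫ t, ({p : ℝ × ℝ | p.1 < p.2}.indicator (fun p => ν' p.2)) (y, t)))|)
          (Set.Ioc 0 M) := by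
        refine Integrable.mono' ((hbase_pos M hM).const_mul (C / α)) ?_ ?_
        · exact ((measurable_id.mul hNposM.neg).abs).aestronglyMeasurable
        · filter_upwards [ae_restrict_mem measurableSet_Ioc] with x hx
          have hx0 : 0 < x := hx.1
          rw [Real.norm_eq_abs, abs_abs, abs_mul, abs_neg, hNpos_eq x]
          have hb : |∫ t in Set.Ioi x, ν' t| ≤ C / α * x ^ (-α) :=
            levy_g_val hα1 hmeas hbd hx0
          have h2 : |x| * |∫ t in Set.Ioi x, ν' t| ≤ |x| * (C / α * x ^ (-α)) :=
            mul_le_mul_of_nonneg_left hb (abs_nonneg x)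
          refine h2.trans (le_of_eq ?_)
          rw [abs_of_pos hx0, show (1:ℝ) - α = 1 + (-α) by ring,
            Real.rpow_add hx0, Real.rpow_one]
          ring
      refine hmodel.congr_fun ?_ measurableSet_Ioc
      intro x hx
      simp only
      rw [hNpos_eq x, ← hνpos x hx.1]
end

section
/- Let g ∈ L¹(ℝ) ∩ L²(ℝ) with g(x) ≥ 0 almost everywhere and M = ∫_{-∞}^{∞} g(x) dx > 0. Define K(u) = -(1/(M√(2π))) ∫_{-∞}^{∞} g(x) e^{-iux} dx and N(u) = K(u)/(1 - √(2π) K(u)). Then 1 - √(2π) K(u) ≠ 0 for every u ∈ ℝ, the function N is bounded on ℝ, and N ∈ L²(ℝ). -/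
/-!
Write `ŵ(u) = ∫ g(x) e^{-iux} dx`, so that `1 - √(2π) K = (M + ŵ) / M` and
`N = -ŵ / (√(2π) (M + ŵ))`. Since `g ≥ 0`, `Re (M + ŵ(u)) = ∫ g(x) (1 + cos(ux)) dx`, and this is
positive because `1 + cos(ux)` vanishes only on a null set while `g` does not vanish a.e.
By Riemann–Lebesgue `M + ŵ` is continuous with limit `M` at infinity, so `1 / (M + ŵ)` is
bounded, and `N` inherits boundedness and square integrability from `ŵ`. That `ŵ ∈ L²` is
Plancherel: the `L²` Fourier transform of `g` and the Fourier integral of `g` define the same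
tempered distribution, hence agree a.e.
-/

open MeasureTheory Filter Real Complex
open scoped FourierTransform Topology

theorem Continuous.exists_forall_norm_le_of_tendsto_cocompact {X E : Type*}
    [TopologicalSpace X] [NormedAddCommGroup E] {f : X → E} {a : E} (hf : Continuous f)
    (h : Tendsto f (cocompact X) (𝓝 a)) : ∃ C, ∀ x, ‖f x‖ ≤ C := by
  let f₀ : ZeroAtInftyContinuousMap X E :=
    ⟨⟨fun x => f x - a, hf.sub continuous_const⟩, by simpa using h.sub_const a⟩
  refine ⟨‖f₀.toBCF‖ + ‖a‖, fun x => ?_⟩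
  calc ‖f x‖ = ‖f₀.toBCF x + a‖ := by simp [f₀]
    _ ≤ ‖f₀.toBCF‖ + ‖a‖ := (norm_add_le _ _).trans (by gcongr; exact f₀.toBCF.norm_coe_le_norm x)

theorem exists_forall_norm_div_const_add_le {X 𝕜 : Type*} [TopologicalSpace X]
    [NontriviallyNormedField 𝕜] {w : X → 𝕜} {c : 𝕜} (hw : Continuous w)
    (hlim : Tendsto w (cocompact X) (𝓝 0)) (hc : c ≠ 0) (hD : ∀ x, c + w x ≠ 0) :
    ∃ B, 0 ≤ B ∧ ∀ x, ‖w x / (c + w x)‖ ≤ B * ‖w x‖ := by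
  obtain ⟨B, hB⟩ := ((continuous_const.add hw).inv₀ hD).exists_forall_norm_le_of_tendsto_cocompact
    ((tendsto_const_nhds.add hlim).inv₀ (by simpa using hc))
  refine ⟨max B 0, le_max_right _ _, fun x => ?_⟩
  rw [div_eq_mul_inv, norm_mul, mul_comm]
  exact mul_le_mul_of_nonneg_right ((hB x).trans (le_max_left _ _)) (norm_nonneg _)

theorem MeasureTheory.MemLp.comp_div_const {F : Type*} [NormedAddCommGroup F] {f : ℝ → F}
    {p : ENNReal} (hf : MemLp f p) {c : ℝ} (hc : c ≠ 0) : MemLp (fun x => f (x / c)) p := by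
  have hmap : Measure.map (· * c⁻¹) volume = ENNReal.ofReal |c⁻¹⁻¹| • (volume : Measure ℝ) :=
    Real.map_volume_mul_right (inv_ne_zero hc)
  have hf' : MemLp f p (Measure.map (· * c⁻¹) volume) :=
    hmap ▸ hf.smul_measure ENNReal.ofReal_ne_top
  simp_rw [div_eq_mul_inv]
  exact hf'.comp_of_map (measurable_id.mul_const _).aemeasurable

section Plancherel

variable {V F : Type*} [NormedAddCommGroup V] [InnerProductSpace ℝ V] [FiniteDimensional ℝ V]
  [MeasurableSpace V] [BorelSpace V]
  [NormedAddCommGroup F] [InnerProductSpace ℂ F] [CompleteSpace F]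

theorem SchwartzMap.integral_smul_fourier_eq_integral_fourier_smul {f : V → F}
    (hf : Integrable f) (ψ : SchwartzMap V ℂ) : ∫ x, ψ x • 𝓕 f x = ∫ x, 𝓕 ψ x • f x := by
  have h := VectorFourier.integral_fourierIntegral_smul_eq_flip (L := innerₗ V)
    Real.continuous_fourierChar continuous_inner (ψ.integrable (μ := volume)) hf
  rw [flip_innerₗ] at h
  rw [SchwartzMap.fourier_coe]
  exact h.symm

theorem MeasureTheory.MemLp.fourier_of_integrable {f : V → F} (hf1 : Integrable f)
    (hf2 : MemLp f 2) : MemLp (𝓕 f) 2 := by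
  set h : Lp F 2 (volume : Measure V) := 𝓕 (hf2.toLp f)
  suffices 𝓕 f =ᵐ[volume] h from (Lp.memLp h).ae_eq this.symm
  refine ae_eq_of_integral_contDiff_smul_eq ?_ ((Lp.memLp h).locallyIntegrable one_le_two)
    fun φ hφ hφc => ?_
  · exact (VectorFourier.fourierIntegral_continuous Real.continuous_fourierChar
      (innerSL ℝ).continuous₂ hf1).locallyIntegrable
  set ψ : SchwartzMap V ℂ := (hφc.comp_left Complex.ofReal_zero).toSchwartzMap
    (Complex.ofRealCLM.contDiff.comp hφ)
  have hψ : ∀ x, ψ x = (φ x : ℂ) := fun _ => rfl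
  calc ∫ x, φ x • 𝓕 f x = ∫ x, ψ x • 𝓕 f x := by simp [hψ, Complex.coe_smul]
    _ = ∫ x, 𝓕 ψ x • f x := ψ.integral_smul_fourier_eq_integral_fourier_smul hf1
    _ = Lp.toTemperedDistribution (hf2.toLp f) (𝓕 ψ) := by
        rw [Lp.toTemperedDistribution_apply]
        refine integral_congr_ae ?_
        filter_upwards [hf2.coeFn_toLp] with x hx
        rw [hx, SchwartzMap.fourier_coe]
    _ = Lp.toTemperedDistribution h ψ := by
        rw [← Lp.fourier_toTemperedDistribution_eq]; rfl
    _ = ∫ x, φ x • h x := by simp [hψ, Complex.coe_smul]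

end Plancherel

section AngularFourier

noncomputable def angularFourier (f : ℝ → ℂ) (u : ℝ) : ℂ := ∫ x, f x * cexp (-(I * u * x))

theorem angularFourier_eq_fourier (f : ℝ → ℂ) (u : ℝ) :
    angularFourier f u = 𝓕 f (u / (2 * π)) := by
  rw [Real.fourier_real_eq_integral_exp_smul, angularFourier]
  congr 1 with x
  rw [smul_eq_mul, mul_comm]
  congr 2
  push_cast
  field_simp

theorem continuous_angularFourier {f : ℝ → ℂ} (hf : Integrable f) :
    Continuous (angularFourier f) := by
  simp_rw [funext (angularFourier_eq_fourier f)]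
  exact (VectorFourier.fourierIntegral_continuous Real.continuous_fourierChar
    (innerSL ℝ).continuous₂ hf).comp (continuous_id.div_const _)

theorem tendsto_angularFourier_cocompact (f : ℝ → ℂ) :
    Tendsto (angularFourier f) (cocompact ℝ) (𝓝 0) := by
  simp_rw [funext (angularFourier_eq_fourier f), div_eq_mul_inv]
  exact (Real.zero_at_infty_fourier f).comp
    (Homeomorph.mulRight₀ _ (by positivity)).toCocompactMap.cocompact_tendsto'

theorem norm_angularFourier_le (f : ℝ → ℂ) (u : ℝ) :
    ‖angularFourier f u‖ ≤ ∫ x, ‖f x‖ :=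
  (norm_integral_le_integral_norm _).trans_eq (by simp [Complex.norm_exp])

theorem memLp_two_angularFourier {f : ℝ → ℂ} (hf1 : Integrable f) (hf2 : MemLp f 2) :
    MemLp (angularFourier f) 2 := by
  simp_rw [funext (angularFourier_eq_fourier f)]
  exact (hf2.fourier_of_integrable hf1).comp_div_const (by positivity)

theorem re_angularFourier_ofReal {g : ℝ → ℝ} (hg : Integrable g) (u : ℝ) :
    (angularFourier (fun x => (g x : ℂ)) u).re = ∫ x, g x * Real.cos (u * x) := by
  have hint : Integrable (fun x : ℝ => (g x : ℂ) * cexp (-(I * u * x))) :=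
    hg.ofReal.mul_bdd (c := 1) (by fun_prop) (.of_forall fun x => by simp [Complex.norm_exp])
  rw [angularFourier, ← RCLike.re_eq_complex_re, ← integral_re hint]
  congr 1 with x
  rw [show -(I * u * x) = ((-(u * x) : ℝ) : ℂ) * I by push_cast; ring,
    RCLike.re_eq_complex_re, re_ofReal_mul, exp_ofReal_mul_I_re, Real.cos_neg]

end AngularFourier

theorem volume_setOf_cos_mul_eq_neg_one (u : ℝ) :
    volume {x : ℝ | Real.cos (u * x) = -1} = 0 := by
  rcases eq_or_ne u 0 with rfl | hu
  · norm_num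
  refine measure_mono_null (fun x hx => ?_)
    ((Set.countable_range fun k : ℤ => (π + k * (2 * π)) / u).measure_zero _)
  obtain ⟨k, hk⟩ := Real.cos_eq_neg_one_iff.mp hx
  exact ⟨k, by field_simp; linarith⟩

theorem integral_add_integral_mul_cos_pos {g : ℝ → ℝ} (hg : Integrable g)
    (hg0 : 0 ≤ᵐ[volume] g) (hpos : 0 < ∫ x, g x) (u : ℝ) :
    0 < (∫ x, g x) + ∫ x, g x * Real.cos (u * x) := by
  have hcos : Integrable (fun x => g x * Real.cos (u * x)) :=
    hg.mul_bdd (c := 1) (by fun_prop) (.of_forall fun x => by simpa using abs_cos_le_one _)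
  have hsupp : Function.support (fun x => g x * (1 + Real.cos (u * x)))
      = Function.support g \ {x | Real.cos (u * x) = -1} := by
    ext x; simp [Function.mem_support, add_eq_zero_iff_eq_neg']
  have hnonneg : 0 ≤ᵐ[volume] fun x => g x * (1 + Real.cos (u * x)) := by
    filter_upwards [hg0] with x hx using mul_nonneg hx (by linarith [neg_one_le_cos (u * x)])
  rw [integral_pos_iff_support_of_nonneg_ae hg0 hg] at hpos
  rw [← integral_add hg hcos]
  simp_rw [← mul_one_add]
  rw [integral_pos_iff_support_of_nonneg_ae hnonneg
      ((hg.add hcos).congr (.of_forall fun x => (mul_one_add _ _).symm)),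
    hsupp, measure_sdiff_null (volume_setOf_cos_mul_eq_neg_one u)]
  exact hpos

theorem ofReal_integral_add_angularFourier_ne_zero {g : ℝ → ℝ} (hg : Integrable g)
    (hg0 : 0 ≤ᵐ[volume] g) (hpos : 0 < ∫ x, g x) (u : ℝ) :
    ((∫ x, g x : ℝ) : ℂ) + angularFourier (fun x => (g x : ℂ)) u ≠ 0 := by
  intro h
  have hre := congrArg re h
  rw [add_re, ofReal_re, re_angularFourier_ofReal hg, zero_re] at hre
  exact (integral_add_integral_mul_cos_pos hg hg0 hpos u).ne' hre

/-- **Formulas (3.4)–(3.7)** (Sakhnovich, "Levy Processes, Generators").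
For a nonnegative Lévy density `g ∈ L¹ ∩ L²` with total mass `M = ∫ g > 0`,
`K(u) = -(1/(M√(2π))) ∫ g(x) e^{-iux} dx` and `N(u) = K(u)/(1 - √(2π) K(u))`, the
denominator `1 - √(2π) K(u)` never vanishes, `N` is bounded, and `N ∈ L²(ℝ)`. -/
theorem compound_poisson_potential_symbol_properties
    (g : ℝ → ℝ) (hg1 : Integrable g) (hg2 : MemLp g 2 (volume : Measure ℝ))
    (hgpos : ∀ᵐ x : ℝ, 0 ≤ g x)
    (M : ℝ) (hM : M = ∫ x : ℝ, g x) (hMpos : 0 < M)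
    (K N : ℝ → ℂ)
    (hK : ∀ u : ℝ, K u = (-(1 / (M * Real.sqrt (2 * Real.pi))) : ℝ) *
      ∫ x : ℝ, (g x : ℂ) * Complex.exp (-(Complex.I * (u : ℂ) * (x : ℂ))))
    (hN : ∀ u : ℝ, N u = K u / (1 - (Real.sqrt (2 * Real.pi) : ℂ) * K u)) :
    (∀ u : ℝ, (1 : ℂ) - (Real.sqrt (2 * Real.pi) : ℂ) * K u ≠ 0) ∧
    (∃ C : ℝ, ∀ u : ℝ, ‖N u‖ ≤ C) ∧
    MemLp N 2 (volume : Measure ℝ) := by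
  set w := angularFourier (fun x => (g x : ℂ))
  have hw : Continuous w := continuous_angularFourier hg1.ofReal
  have hKw : ∀ u, K u = -(w u / (M * √(2 * π))) := fun u => by
    rw [hK]; push_cast; ring_nf; rfl
  have hsq : 0 < √(2 * π) := Real.sqrt_pos.2 (by positivity)
  have hM0 : (M : ℂ) ≠ 0 := by exact_mod_cast hMpos.ne'
  have hD : ∀ u, (M : ℂ) + w u ≠ 0 :=
    hM ▸ ofReal_integral_add_angularFourier_ne_zero hg1 hgpos (hM ▸ hMpos)
  have hden : ∀ u, 1 - (√(2 * π) : ℂ) * K u = (M + w u) / M := fun u => by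
    rw [hKw]; field_simp; ring
  have hNw : ∀ u, N u = -(w u / (M + w u)) / √(2 * π) := fun u => by
    rw [hN, hden, hKw]; field_simp
  obtain ⟨B, hB0, hB⟩ :=
    exists_forall_norm_div_const_add_le hw (tendsto_angularFourier_cocompact _) hM0 hD
  have hN_le : ∀ u, ‖N u‖ ≤ B / √(2 * π) * ‖w u‖ := fun u => by
    rw [hNw, norm_div, norm_neg, Complex.norm_real, Real.norm_of_nonneg hsq.le, div_mul_eq_mul_div]
    exact div_le_div_of_nonneg_right (hB u) hsq.le
  have hw_le : ∀ u, ‖w u‖ ≤ M := fun u => (norm_angularFourier_le _ u).trans_eq <| by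
    rw [hM]; exact integral_congr_ae (by filter_upwards [hgpos] with x hx; simp [hx])
  refine ⟨fun u => hden u ▸ div_ne_zero (hD u) hM0,
    ⟨B / √(2 * π) * M, fun u => (hN_le u).trans (by gcongr; exact hw_le u)⟩, ?_⟩
  have hN_cont : Continuous N := by
    rw [funext hNw]; exact ((hw.div (continuous_const.add hw) hD).neg).div_const _
  exact (memLp_two_angularFourier hg1.ofReal hg2.ofReal).of_le_mul hN_cont.aestronglyMeasurable
    (.of_forall hN_le)
end
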